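/- Let H be a finitely generated abelian group of rank ≥ 2 and let q be an element of the total quotient ring of ℤ[H] such that q·(h − 1) ∈ ℤ[H] for every h ∈ H. Then q ∈ ℤ[H]. -/

import Mathlib

/-!
Choose `x, y ∈ H` that are linearly independent in `ℚ ⊗ H`. Then `x - 1` is a nonzerodivisor of
`ℤ[H]`, and `r₁ = q (x - 1)`, `r₂ = q (y - 1)` satisfy `r₁ (y - 1) = r₂ (x - 1)`. The kernel of
`ℤ[H] → ℤ[H/⟨x⟩]` is generated by `x - 1`, and `y - 1` stays a nonzerodivisor in `ℤ[H/⟨x⟩]`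
since `y` has infinite order there; so `x - 1` divides `r₁`, and `q = r₁ / (x - 1) ∈ ℤ[H]`.
-/

universe u

theorem exists_linearIndependent_pair_of_two_le_rank {R : Type*} {M : Type u} [Ring R]
    [HasRankNullity.{u} R] [StrongRankCondition R] [AddCommGroup M] [Module R M]
    (h : 2 ≤ Module.rank R M) :
    ∃ x y : M, LinearIndependent R ![x, y] := by
  obtain ⟨y, hy⟩ := exists_linearIndependent_cons_of_lt_rank
    (linearIndependent_empty_type (ι := Fin 0)) (lt_of_lt_of_le (by norm_num) h)
  obtain ⟨x, hx⟩ := exists_linearIndependent_cons_of_lt_rank hy (lt_of_lt_of_le (by norm_num) h)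
  exact ⟨x, y, hx⟩

theorem rank_int_eq_rank_rat_tensorProduct (M : Type*) [AddCommGroup M] :
    Module.rank ℤ M = Module.rank ℚ (TensorProduct ℤ ℚ M) := by
  rw [IsFractionRing.rank_right_eq ℤ ℚ]
  exact (IsLocalizedModule.rank_eq (nonZeroDivisors ℤ) le_rfl (TensorProduct.mk ℤ ℚ M 1)).symm

theorem not_isOfFinOrder_of_linearIndependent {H : Type*} [CommGroup H] {x y : H}
    (h : LinearIndependent ℤ ![Additive.ofMul x, Additive.ofMul y]) :
    ¬IsOfFinOrder x ∧ ¬IsOfFinOrder (y : H ⧸ Subgroup.zpowers x) := by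
  rw [LinearIndependent.pair_iff] at h
  constructor
  · intro hx
    obtain ⟨n, hn, hxn⟩ := isOfFinOrder_iff_pow_eq_one.mp hx
    have := h n 0 (by simpa [← ofMul_pow] using congrArg Additive.ofMul hxn)
    omega
  · intro hy
    obtain ⟨n, hn, hyn⟩ := isOfFinOrder_iff_pow_eq_one.mp hy
    rw [← QuotientGroup.mk_pow, QuotientGroup.eq_one_iff] at hyn
    obtain ⟨m, hm⟩ := Subgroup.mem_zpowers_iff.mp hyn
    have := h (-m) n (by simp [← ofMul_zpow, ← ofMul_pow, hm])
    omega

namespace MonoidAlgebra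

variable {R G : Type*} [CommRing R] [CommGroup G]

theorem of_sub_one_mem_nonZeroDivisors {g : G} (hg : ¬IsOfFinOrder g) :
    of R G g - 1 ∈ nonZeroDivisors R[G] := by
  classical
  rw [mem_nonZeroDivisors_iff_right]
  intro f hf
  rw [mul_sub, mul_one, sub_eq_zero, of_apply] at hf
  -- the finite support of `f` is stable under translation by `g`, which has infinite order
  have hS : f.coeff.support.image (· * g) = f.coeff.support := by
    rw [← support_coeff_mul_single_eq_image f (fun y => by rw [mul_one]) (mul_left_injective g),
      hf]
  by_contra hne
  obtain ⟨x, hx⟩ := Finsupp.support_nonempty_iff.mpr (mt coeff_eq_zero.mp hne)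
  have hmem : ∀ n : ℕ, x * g ^ n ∈ f.coeff.support := by
    intro n
    induction n with
    | zero => simpa using hx
    | succ n ih =>
      rw [← hS, pow_succ, ← mul_assoc]
      exact Finset.mem_image_of_mem _ ih
  exact Set.infinite_of_injective_forall_mem
    ((mul_right_injective x).comp (injective_pow_iff_not_isOfFinOrder.mpr hg)) hmem
    f.coeff.support.finite_toSet

theorem of_sub_one_dvd_of_sub_one_of_mem_zpowers {g h : G} (hh : h ∈ Subgroup.zpowers g) :
    of R G g - 1 ∣ of R G h - 1 := by
  rw [Subgroup.zpowers_eq_closure] at hh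
  induction hh using Subgroup.closure_induction with
  | mem x hx => rw [Set.mem_singleton_iff.mp hx]
  | one => rw [map_one, sub_self]; exact dvd_zero _
  | mul x y _ _ hx hy =>
    have : of R G (x * y) - 1 = of R G x * (of R G y - 1) + (of R G x - 1) := by
      rw [map_mul]; ring
    rw [this]
    exact (hy.mul_left _).add hx
  | inv x _ hx =>
    have : of R G x⁻¹ - 1 = -of R G x⁻¹ * (of R G x - 1) := by
      rw [neg_mul, mul_sub, ← map_mul, inv_mul_cancel, map_one]; ring
    rw [this]
    exact hx.mul_left _

theorem of_sub_one_dvd_sub_mapDomain (g : G) {σ : G → G}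
    (hσ : ∀ x, x⁻¹ * σ x ∈ Subgroup.zpowers g) (f : R[G]) :
    of R G g - 1 ∣ f - mapDomain σ f := by
  induction f using induction_linear with
  | zero => simp
  | add f₁ f₂ h₁ h₂ =>
    rw [mapDomain_add, add_sub_add_comm]
    exact h₁.add h₂
  | single x r =>
    have : single x r - mapDomain σ (single x r) = -single x r * (of R G (x⁻¹ * σ x) - 1) := by
      rw [mapDomain_single, of_apply, neg_mul, mul_sub, single_mul_single, mul_inv_cancel_left,
        mul_one, mul_one]
      ring
    rw [this]
    exact (of_sub_one_dvd_of_sub_one_of_mem_zpowers (hσ x)).mul_left _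

theorem of_sub_one_dvd_of_mapDomain_eq_zero (g : G) {f : R[G]}
    (hf : mapDomainRingHom R (QuotientGroup.mk' (Subgroup.zpowers g)) f = 0) :
    of R G g - 1 ∣ f := by
  have hσ : ∀ x : G, x⁻¹ * (x : G ⧸ Subgroup.zpowers g).out ∈ Subgroup.zpowers g := by
    intro x
    obtain ⟨⟨n, hn⟩, he⟩ := QuotientGroup.mk_out_eq_mul (Subgroup.zpowers g) x
    rwa [he, inv_mul_cancel_left]
  -- moving each coefficient to a fixed representative of its coset changes `f` by a multiple
  -- of `g - 1`, and by `hf` gives `0`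
  rw [mapDomainRingHom_apply, QuotientGroup.coe_mk'] at hf
  have hσf : mapDomain (fun x : G => (x : G ⧸ Subgroup.zpowers g).out) f = 0 := by
    calc mapDomain (fun x : G => (x : G ⧸ Subgroup.zpowers g).out) f
        = mapDomain Quotient.out (mapDomain QuotientGroup.mk f) := by
          ext1; simp only [coeff_mapDomain, ← Finsupp.mapDomain_comp]; rfl
      _ = 0 := by rw [hf, mapDomain_zero]
  simpa [hσf] using of_sub_one_dvd_sub_mapDomain g hσ f

theorem of_sub_one_dvd_of_mul_eq_mul {x y : G} (hy : ¬IsOfFinOrder (y : G ⧸ Subgroup.zpowers x))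
    {a b : R[G]} (h : a * (of R G y - 1) = b * (of R G x - 1)) : of R G x - 1 ∣ a := by
  let π := mapDomainRingHom R (QuotientGroup.mk' (Subgroup.zpowers x))
  have hπ : ∀ z : G, π (of R G z - 1) = of R _ (z : G ⧸ Subgroup.zpowers x) - 1 := by
    intro z
    rw [map_sub, map_one, of_apply, of_apply]
    congr 1
    exact mapDomain_single
  have hπx : π (of R G x - 1) = 0 := by
    rw [hπ, (QuotientGroup.eq_one_iff x).mpr (Subgroup.mem_zpowers x), map_one, sub_self]
  have : π a * (of R _ (y : G ⧸ Subgroup.zpowers x) - 1) = 0 := by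
    rw [← hπ, ← map_mul, h, map_mul, hπx, mul_zero]
  have hreg := of_sub_one_mem_nonZeroDivisors (R := R) hy
  have hπa : π a = 0 := mem_nonZeroDivisors_iff_right.mp hreg (π a) this
  exact of_sub_one_dvd_of_mapDomain_eq_zero x hπa

end MonoidAlgebra

open MonoidAlgebra in
theorem filtration_trivial_of_rank_ge_two_general {H : Type*} [CommGroup H]
    (hrank : 2 ≤ Module.finrank ℚ (TensorProduct ℤ ℚ (Additive H)))
    (q : FractionRing (MonoidAlgebra ℤ H))
    (hq : ∀ g : H, ∃ r : MonoidAlgebra ℤ H,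
      algebraMap (MonoidAlgebra ℤ H) (FractionRing (MonoidAlgebra ℤ H)) r =
        q * algebraMap (MonoidAlgebra ℤ H) (FractionRing (MonoidAlgebra ℤ H))
          (MonoidAlgebra.of ℤ H g - 1)) :
    ∃ r : MonoidAlgebra ℤ H,
      algebraMap (MonoidAlgebra ℤ H) (FractionRing (MonoidAlgebra ℤ H)) r = q := by
  have hrank' : 2 ≤ Module.rank ℤ (Additive H) := by
    rw [rank_int_eq_rank_rat_tensorProduct]
    exact (Nat.cast_le.mpr hrank).trans (Cardinal.natCast_toNat_le _)
  obtain ⟨x, y, hxy⟩ := exists_linearIndependent_pair_of_two_le_rank hrank'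
  obtain ⟨hx, hy⟩ := not_isOfFinOrder_of_linearIndependent (x := x.toMul) (y := y.toMul) hxy
  obtain ⟨r₁, hr₁⟩ := hq x.toMul
  obtain ⟨r₂, hr₂⟩ := hq y.toMul
  have key : r₁ * (of ℤ H y.toMul - 1) = r₂ * (of ℤ H x.toMul - 1) :=
    IsFractionRing.injective (MonoidAlgebra ℤ H) (FractionRing (MonoidAlgebra ℤ H)) <| by
      rw [map_mul, map_mul, hr₁, hr₂]; ring
  obtain ⟨s, rfl⟩ := of_sub_one_dvd_of_mul_eq_mul hy key
  have hunit := IsLocalization.map_units (M := nonZeroDivisors (MonoidAlgebra ℤ H))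
    (FractionRing (MonoidAlgebra ℤ H)) ⟨_, of_sub_one_mem_nonZeroDivisors hx⟩
  refine ⟨s, hunit.mul_left_cancel ?_⟩
  rw [← map_mul, hr₁, mul_comm]

/-- If `H` is a finitely generated abelian group of rank at least 2 and `q` is an element
of the total quotient ring of `ℤ[H]` such that `q * (h - 1) ∈ ℤ[H]` for every `h ∈ H`,
then `q ∈ ℤ[H]`. -/
theorem filtration_trivial_of_rank_ge_two {H : Type*} [CommGroup H] [Group.FG H]
    (hrank : 2 ≤ Module.finrank ℚ (TensorProduct ℤ ℚ (Additive H)))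
    (q : FractionRing (MonoidAlgebra ℤ H))
    (hq : ∀ g : H, ∃ r : MonoidAlgebra ℤ H,
      algebraMap (MonoidAlgebra ℤ H) (FractionRing (MonoidAlgebra ℤ H)) r =
        q * algebraMap (MonoidAlgebra ℤ H) (FractionRing (MonoidAlgebra ℤ H))
          (MonoidAlgebra.of ℤ H g - 1)) :
    ∃ r : MonoidAlgebra ℤ H,
      algebraMap (MonoidAlgebra ℤ H) (FractionRing (MonoidAlgebra ℤ H)) r = q :=
  filtration_trivial_of_rank_ge_two_general hrank q hq
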